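/- arXiv:1903.04662 — 2 statements merged into one kernel-verified Lean document; each statement's English description precedes it below -/
import Mathlib

section
/- Let v₀ be an n×n real matrix with antisymmetric part K = (v₀ − v₀ᵀ)/2 and symmetric part P = (v₀ + v₀ᵀ)/2. Then the curve v(t) := K + exp(−2tK) · P · exp(2tK) satisfies v(0) = v₀ and is differentiable with v′(t) = −2[K, exp(−2tK) · P · exp(2tK)] for all t ∈ ℝ; that is, v solves the Euler–Arnold equation v̇ = −2[v_𝔨, v_𝔭], where v_𝔨(t) = K and v_𝔭(t) = exp(−2tK) · P · exp(2tK) are the antisymmetric and symmetric parts of v(t). -/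
open Matrix NormedSpace

attribute [local instance] Matrix.linftyOpNormedAddCommGroup
  Matrix.linftyOpNormedSpace Matrix.linftyOpNormedRing Matrix.linftyOpNormedAlgebra

/-!
Since `K` commutes with `exp(sK)`, the product rule turns the derivative of the conjugate
`exp(-2tK) P exp(2tK)` into its commutator with `2K`; at `t = 0` the curve is `K + P = v₀`.
-/

section ExpConjugation

variable {𝕂 𝔸 : Type*} [RCLike 𝕂] [NormedRing 𝔸] [NormedAlgebra 𝕂 𝔸] [CompleteSpace 𝔸]

theorem hasDerivAt_exp_mul_smul (c : 𝕂) (x : 𝔸) (t : 𝕂) :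
    HasDerivAt (fun s : 𝕂 => exp ((c * s) • x)) (exp ((c * t) • x) * (c • x)) t := by
  simpa only [smul_smul, mul_comm] using hasDerivAt_exp_smul_const (c • x) t

theorem hasDerivAt_exp_conj (c : 𝕂) (x p : 𝔸) (t : 𝕂) :
    HasDerivAt (fun s : 𝕂 => exp ((-c * s) • x) * p * exp ((c * s) • x))
      (c • (exp ((-c * t) • x) * p * exp ((c * t) • x) * x
        - x * (exp ((-c * t) • x) * p * exp ((c * t) • x)))) t := by
  have hprod := ((hasDerivAt_exp_mul_smul (-c) x t).mul_const p).mul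
    (hasDerivAt_exp_mul_smul c x t)
  refine hprod.congr_deriv ?_
  set e := exp ((-c * t) • x)
  have hcomm : e * x = x * e := (((Commute.refl x).smul_right _).exp_right).eq.symm
  simp only [mul_smul_comm, smul_mul_assoc, ← mul_assoc, hcomm]
  module

end ExpConjugation

/-- Let `v₀` be an `n × n` real matrix with antisymmetric part `K` and
symmetric part `P`. Then `v(t) = K + exp(-2tK) · P · exp(2tK)` satisfies
`v(0) = v₀` and `v'(t) = -2 [K, exp(-2tK) · P · exp(2tK)]`, i.e. `v` solves
the Euler–Arnold equation `v̇ = -2 [v𝔨, v𝔭]`. -/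
theorem euler_arnold_solution {n : ℕ}
    (v₀ K P : Matrix (Fin n) (Fin n) ℝ)
    (hK : K = (2 : ℝ)⁻¹ • (v₀ - v₀ᵀ)) (hP : P = (2 : ℝ)⁻¹ • (v₀ + v₀ᵀ)) :
    (fun t : ℝ => K + exp ((-2 * t) • K) * P * exp ((2 * t) • K)) 0 = v₀ ∧
    ∀ t : ℝ, HasDerivAt
      (fun t : ℝ => K + exp ((-2 * t) • K) * P * exp ((2 * t) • K))
      ((-2 : ℝ) • (K * (exp ((-2 * t) • K) * P * exp ((2 * t) • K))
        - (exp ((-2 * t) • K) * P * exp ((2 * t) • K)) * K)) t := by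
  refine ⟨?_, fun t => ?_⟩
  · simp only [mul_zero, zero_smul, exp_zero, one_mul, mul_one, hK, hP]
    module
  · have hconj := (hasDerivAt_exp_conj (2 : ℝ) K P t).const_add K
    rwa [← neg_sub, smul_neg, ← neg_smul] at hconj
end

section
/- Let v₀ be an n×n real matrix with antisymmetric part K = (v₀ − v₀ᵀ)/2 and symmetric part P = (v₀ + v₀ᵀ)/2, and let q₀ be any n×n real matrix. Define v(t) := K + exp(−2tK) · P · exp(2tK) and q(t) := q₀ · exp(t(P − K)) · exp(2tK). Then q is differentiable with q(0) = q₀ and q′(t) = q(t) · v(t) for all t ∈ ℝ; that is, (q(t), v(t)) solves the reconstruction equation for the geodesic flow of the left-invariant metric induced by ⟨A,B⟩ = tr(AᵀB). -/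
/-!
The curve `q` is `q₀` times a product of two one-parameter groups `exp (t • X) * exp (t • Y)`,
whose logarithmic derivative is `exp (-(t • Y)) * X * exp (t • Y) + Y` by the product rule.
For `X = P - K` and `Y = 2 • K`, conjugation by `exp (t • Y)` fixes `K`, which commutes with it,
so the velocity is `-K + 2 • K + exp (-(t • Y)) * P * exp (t • Y)`.
-/

open Matrix NormedSpace

attribute [local instance] Matrix.linftyOpNormedAddCommGroup
  Matrix.linftyOpNormedSpace Matrix.linftyOpNormedRing Matrix.linftyOpNormedAlgebra

section

variable {𝔸 : Type*} [NormedRing 𝔸] [NormedAlgebra ℝ 𝔸] [NormedAlgebra ℚ 𝔸] [CompleteSpace 𝔸]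

theorem hasDerivAt_exp_smul_mul_exp_smul (X Y : 𝔸) (t : ℝ) :
    HasDerivAt (fun t : ℝ => exp (t • X) * exp (t • Y))
      (exp (t • X) * exp (t • Y) * (exp (-(t • Y)) * X * exp (t • Y) + Y)) t := by
  have hinv : exp (t • Y) * exp (-(t • Y)) = 1 := by
    rw [← NormedSpace.exp_add_of_commute (Commute.refl _).neg_right, add_neg_cancel, exp_zero]
  refine ((hasDerivAt_exp_smul_const X t).mul (hasDerivAt_exp_smul_const Y t)).congr_deriv ?_
  rw [mul_add, ← mul_assoc]
  congr 1
  simp only [← mul_assoc, mul_assoc (exp (t • X)) _ (exp (-(t • Y))), hinv, mul_one]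

theorem hasDerivAt_exp_smul_sub_mul_exp_two_mul_smul (K P : 𝔸) (t : ℝ) :
    HasDerivAt (fun t : ℝ => exp (t • (P - K)) * exp ((2 * t) • K))
      (exp (t • (P - K)) * exp ((2 * t) • K) *
        (K + exp ((-2 * t) • K) * P * exp ((2 * t) • K))) t := by
  have hsmul (s u : ℝ) : (s * u) • K = u • s • K := by rw [mul_comm, mul_smul]
  have hK : Commute K (t • (2 : ℝ) • K) := ((Commute.refl K).smul_right _).smul_right t
  simp only [hsmul, neg_smul, smul_neg]
  refine (hasDerivAt_exp_smul_mul_exp_smul (P - K) ((2 : ℝ) • K) t).congr_deriv ?_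
  rw [mul_sub, sub_mul, hK.exp_neg_mul_mul_exp_eq_self]
  congr 1
  module

end

theorem reconstruction_equation_solution_general {n : ℕ}
    (K P q₀ : Matrix (Fin n) (Fin n) ℝ) :
    (fun t : ℝ => q₀ * exp (t • (P - K)) * exp ((2 * t) • K)) 0 = q₀ ∧
    ∀ t : ℝ, HasDerivAt
      (fun t : ℝ => q₀ * exp (t • (P - K)) * exp ((2 * t) • K))
      ((q₀ * exp (t • (P - K)) * exp ((2 * t) • K)) *
        (K + exp ((-2 * t) • K) * P * exp ((2 * t) • K))) t := by
  refine ⟨by simp, fun t => ?_⟩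
  have h := (hasDerivAt_exp_smul_sub_mul_exp_two_mul_smul K P t).const_mul q₀
  simp only [← mul_assoc] at h
  -- `h` is stated for the `L∞`-operator-norm topology, the goal for the product topology;
  -- they agree only up to unfolding, which `exact` does and `simpa` does not.
  exact h

/-- Let `v₀` be an `n × n` real matrix with antisymmetric part `K` and
symmetric part `P`, and `q₀` any matrix. With
`v(t) = K + exp(-2tK) · P · exp(2tK)` and `q(t) = q₀ · exp(t(P-K)) · exp(2tK)`,
the curve `q` satisfies `q(0) = q₀` and the reconstruction equation
`q'(t) = q(t) · v(t)`. -/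
theorem reconstruction_equation_solution {n : ℕ}
    (v₀ K P q₀ : Matrix (Fin n) (Fin n) ℝ)
    (hK : K = (2 : ℝ)⁻¹ • (v₀ - v₀ᵀ)) (hP : P = (2 : ℝ)⁻¹ • (v₀ + v₀ᵀ)) :
    (fun t : ℝ => q₀ * exp (t • (P - K)) * exp ((2 * t) • K)) 0 = q₀ ∧
    ∀ t : ℝ, HasDerivAt
      (fun t : ℝ => q₀ * exp (t • (P - K)) * exp ((2 * t) • K))
      ((q₀ * exp (t • (P - K)) * exp ((2 * t) • K)) *
        (K + exp ((-2 * t) • K) * P * exp ((2 * t) • K))) t :=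
  reconstruction_equation_solution_general K P q₀
end
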